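/- Let u : ℝ × ℝ^m → ℝ be smooth, everywhere positive, ℤ^m-periodic in the spatial variable, with ∂_t u = Δ_x u. Set f = −ln u, w = 2Δf − |∇f|², and E(t) = ∫_{[0,1]^m} |∇f(t,x)|²·u(t,x) dx. Then E is differentiable and E'(t) = ∫_{[0,1]^m} ( ∂_t (u·w)(t,x) − Δ_x (u·w)(t,x) ) dx for every t. -/

import Mathlib

open MeasureTheory
open scoped RealInnerProductSpace

noncomputable section

abbrev E (m : ℕ) := EuclideanSpace ℝ (Fin m)

/-- The standard orthonormal basis of `ℝ^m`. -/
def eE (m : ℕ) (a : Fin m) : E m := EuclideanSpace.single a 1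

/-- Second Fréchet derivative as a bilinear form. -/
def D2E (m : ℕ) (g : E m → ℝ) (x X Y : E m) : ℝ := iteratedFDeriv ℝ 2 g x ![X, Y]

/-- The Laplacian `Δg(x) = Σ_a D²g(x)[e_a, e_a]`. -/
def lapE (m : ℕ) (g : E m → ℝ) (x : E m) : ℝ := ∑ a, D2E m g x (eE m a) (eE m a)

/-- The unit cube `[0,1]^m`. -/
def cube (m : ℕ) : Set (E m) := {x | ∀ i, x i ∈ Set.Icc (0 : ℝ) 1}

/-- The vector of `ℤ^m ⊂ ℝ^m` with integer coordinates `k`. -/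
def latt (m : ℕ) (k : Fin m → ℤ) : E m := WithLp.toLp 2 (fun i => (k i : ℝ))

/-!
On `ℝ × ℝ^m` put `Φ = uncurry u` and `F = -log Φ`. From `∂Φ = -Φ ∂F` one gets, direction by
direction, `∂²Φ = Φ (∂F)² - Φ ∂²F`, hence `u w = |∇f|² u - 2 Δu = G - 2 ΔΦ` with the energy
density `G = |∇F|² Φ`. Mixed partials commute, so the heat equation gives
`(∂ₜ - Δ)(ΔΦ) = Δ((∂ₜ - Δ)Φ) = 0` and therefore `(∂ₜ - Δ)(u w) = (∂ₜ - Δ) G`.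
Differentiating under the integral over the compact cube, `E' = ∫ ∂ₜ G`, while `∫ ΔG = 0` by the
divergence theorem: `∇G` is periodic, so its fluxes through opposite faces of the cube cancel.
-/

open Set
open scoped ContDiff

section DirDeriv

variable {X : Type*} [NormedAddCommGroup X] [NormedSpace ℝ X]

def dirDeriv (v : X) (H : X → ℝ) : X → ℝ := fun p => fderiv ℝ H p v

def lapAlong {ι : Type*} [Fintype ι] (v : ι → X) (H : X → ℝ) (p : X) : ℝ :=
  ∑ i, dirDeriv (v i) (dirDeriv (v i) H) p

def gradNormSqAlong {ι : Type*} [Fintype ι] (v : ι → X) (H : X → ℝ) (p : X) : ℝ :=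
  ∑ i, dirDeriv (v i) H p ^ 2

theorem ContDiff.dirDeriv {H : X → ℝ} (hH : ContDiff ℝ ∞ H) (v : X) :
    ContDiff ℝ ∞ (dirDeriv v H) :=
  (hH.fderiv_right (m := ∞) (by simp)).clm_apply contDiff_const

theorem dirDeriv_comm {H : X → ℝ} (hH : ContDiff ℝ 2 H) (v w p : X) :
    dirDeriv v (dirDeriv w H) p = dirDeriv w (dirDeriv v H) p := by
  have hd : Differentiable ℝ (fderiv ℝ H) :=
    (hH.fderiv_right (m := 1) le_rfl).differentiable one_ne_zero
  have h : ∀ v w, dirDeriv v (dirDeriv w H) p = fderiv ℝ (fderiv ℝ H) p v w := fun v w => by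
    show fderiv ℝ (fun q => fderiv ℝ H q w) p v = _
    simp [fderiv_clm_apply (hd p) (differentiableAt_const w)]
  rw [h, h]
  exact hH.contDiffAt.isSymmSndFDerivAt (by simp) v w

theorem dirDeriv_sub_const_mul {A B : X → ℝ} (hA : Differentiable ℝ A) (hB : Differentiable ℝ B)
    (c : ℝ) (v : X) :
    dirDeriv v (fun p => A p - c * B p) = fun p => dirDeriv v A p - c * dirDeriv v B p := by
  funext p
  simp [dirDeriv, fderiv_fun_sub (hA p) ((hB p).const_mul c), fderiv_const_mul (hB p)]

theorem dirDeriv_sum {ι : Type*} (s : Finset ι) {H : ι → X → ℝ}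
    (hH : ∀ i, Differentiable ℝ (H i)) (v : X) :
    dirDeriv v (fun p => ∑ i ∈ s, H i p) = fun p => ∑ i ∈ s, dirDeriv v (H i) p := by
  funext p
  simp [dirDeriv, fderiv_fun_sum fun i _ => hH i p]

theorem dirDeriv_add_of_periodic {H : X → ℝ} {c : X} (hc : ∀ q, H (q + c) = H q) (v p : X) :
    dirDeriv v H (p + c) = dirDeriv v H p := by
  simp only [dirDeriv, ← fderiv_comp_add_right, hc]

end DirDeriv

section NegLog

variable {X : Type*} [NormedAddCommGroup X] [NormedSpace ℝ X] {Φ : X → ℝ}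

theorem dirDeriv_eq_neg_mul_dirDeriv_negLog (hΦ : Differentiable ℝ Φ) (hne : ∀ p, Φ p ≠ 0)
    (v : X) : dirDeriv v Φ = fun p => -(Φ p * dirDeriv v (fun q => -Real.log (Φ q)) p) := by
  funext p
  have hlog := ((hΦ p).hasFDerivAt.log (hne p)).fun_neg
  simp only [dirDeriv, hlog.fderiv, neg_apply, smul_apply, smul_eq_mul]
  field_simp [hne p]

theorem dirDeriv_dirDeriv_eq_of_negLog (hΦ : ContDiff ℝ ∞ Φ) (hne : ∀ p, Φ p ≠ 0) (v p : X) :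
    dirDeriv v (dirDeriv v Φ) p = Φ p * dirDeriv v (fun q => -Real.log (Φ q)) p ^ 2
      - Φ p * dirDeriv v (dirDeriv v (fun q => -Real.log (Φ q))) p := by
  have hΦd : Differentiable ℝ Φ := hΦ.differentiable (by simp)
  have hF : ContDiff ℝ ∞ (fun q => -Real.log (Φ q)) := (hΦ.log hne).neg
  have hFd := ((hF.dirDeriv v).differentiable (by simp) p).hasFDerivAt
  rw [dirDeriv_eq_neg_mul_dirDeriv_negLog hΦd hne, dirDeriv,
    ((hΦd p).hasFDerivAt.fun_mul hFd).fun_neg.fderiv]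
  simp only [neg_apply, add_apply, smul_apply, smul_eq_mul]
  rw [← dirDeriv, ← dirDeriv, dirDeriv_eq_neg_mul_dirDeriv_negLog hΦd hne]
  ring

theorem mul_two_lapAlong_sub_gradNormSqAlong_negLog (hΦ : ContDiff ℝ ∞ Φ) (hne : ∀ p, Φ p ≠ 0)
    {ι : Type*} [Fintype ι] (v : ι → X) (p : X) :
    Φ p * (2 * lapAlong v (fun q => -Real.log (Φ q)) p
        - gradNormSqAlong v (fun q => -Real.log (Φ q)) p)
      = gradNormSqAlong v (fun q => -Real.log (Φ q)) p * Φ p - 2 * lapAlong v Φ p := by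
  simp only [lapAlong, gradNormSqAlong, dirDeriv_dirDeriv_eq_of_negLog hΦ hne]
  rw [Finset.sum_sub_distrib, ← Finset.mul_sum, ← Finset.mul_sum]
  ring

end NegLog

section Heat

variable {X : Type*} [NormedAddCommGroup X] [NormedSpace ℝ X] {ι : Type*} [Fintype ι]
  (v : ι → X)

theorem ContDiff.lapAlong {H : X → ℝ} (hH : ContDiff ℝ ∞ H) : ContDiff ℝ ∞ (lapAlong v H) :=
  ContDiff.sum fun i _ => (hH.dirDeriv (v i)).dirDeriv (v i)

theorem lapAlong_sub_const_mul {A B : X → ℝ} (hA : ContDiff ℝ ∞ A) (hB : ContDiff ℝ ∞ B)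
    (c : ℝ) :
    lapAlong v (fun p => A p - c * B p) = fun p => lapAlong v A p - c * lapAlong v B p := by
  have hdiff : ∀ {H : X → ℝ}, ContDiff ℝ ∞ H → Differentiable ℝ H :=
    fun h => h.differentiable (by simp)
  have h : ∀ w, dirDeriv w (dirDeriv w (fun p => A p - c * B p))
      = fun p => dirDeriv w (dirDeriv w A) p - c * dirDeriv w (dirDeriv w B) p := fun w => by
    rw [dirDeriv_sub_const_mul (hdiff hA) (hdiff hB),
      dirDeriv_sub_const_mul (hdiff (hA.dirDeriv w)) (hdiff (hB.dirDeriv w))]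
  funext p
  simp only [lapAlong, h, Finset.sum_sub_distrib, Finset.mul_sum]

theorem dirDeriv_lapAlong {H : X → ℝ} (hH : ContDiff ℝ ∞ H) (τ : X) :
    dirDeriv τ (lapAlong v H) = lapAlong v (dirDeriv τ H) := by
  have hdiff : ∀ i, Differentiable ℝ (dirDeriv (v i) (dirDeriv (v i) H)) := fun i =>
    ((hH.dirDeriv (v i)).dirDeriv (v i)).differentiable (by simp)
  have hcomm : ∀ i, dirDeriv τ (dirDeriv (v i) H) = dirDeriv (v i) (dirDeriv τ H) := fun i =>
    funext (dirDeriv_comm (hH.of_le (by decide)) τ (v i))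
  funext p
  rw [show lapAlong v H = fun q => ∑ i, dirDeriv (v i) (dirDeriv (v i) H) q from rfl,
    dirDeriv_sum _ hdiff]
  refine Finset.sum_congr rfl fun i _ => ?_
  rw [dirDeriv_comm ((hH.dirDeriv (v i)).of_le (by decide)), hcomm]

theorem dirDeriv_sub_lapAlong_of_heat {τ : X} {Φ G : X → ℝ} (hΦ : ContDiff ℝ ∞ Φ)
    (hG : ContDiff ℝ ∞ G) (hheat : dirDeriv τ Φ = lapAlong v Φ) (p : X) :
    dirDeriv τ (fun q => G q - 2 * lapAlong v Φ q) p
        - lapAlong v (fun q => G q - 2 * lapAlong v Φ q) p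
      = dirDeriv τ G p - lapAlong v G p := by
  rw [dirDeriv_sub_const_mul (hG.differentiable (by simp))
      ((hΦ.lapAlong v).differentiable (by simp)),
    lapAlong_sub_const_mul v hG (hΦ.lapAlong v), dirDeriv_lapAlong v hΦ, hheat]
  ring

end Heat

section Slices

variable {X : Type*} [NormedAddCommGroup X] [NormedSpace ℝ X] {H : ℝ × X → ℝ}

theorem hasDerivAt_slice_fst (hH : Differentiable ℝ H) (x : X) (t : ℝ) :
    HasDerivAt (fun s => H (s, x)) (dirDeriv (1, 0) H (t, x)) t := by
  simpa [dirDeriv, Function.comp_def] using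
    ((hH (t, x)).hasFDerivAt.comp t
      ((hasFDerivAt_id t).prodMk (hasFDerivAt_const x t))).hasDerivAt

theorem dirDeriv_slice_snd (hH : Differentiable ℝ H) (t : ℝ) (w : X) :
    dirDeriv w (fun y => H (t, y)) = fun y => dirDeriv (0, w) H (t, y) := by
  funext y
  have h := (hH (t, y)).hasFDerivAt.comp y ((hasFDerivAt_const t y).prodMk (hasFDerivAt_id y))
  rw [dirDeriv, show (fun y => H (t, y)) = H ∘ Prod.mk t from rfl, h.fderiv]
  simp [dirDeriv]

variable {ι : Type*} [Fintype ι] (v : ι → X)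

theorem gradNormSqAlong_slice_snd (hH : Differentiable ℝ H) (t : ℝ) (x : X) :
    gradNormSqAlong v (fun y => H (t, y)) x = gradNormSqAlong (fun i => (0, v i)) H (t, x) := by
  simp only [gradNormSqAlong, dirDeriv_slice_snd hH]

theorem lapAlong_slice_snd (hH : ContDiff ℝ ∞ H) (t : ℝ) (x : X) :
    lapAlong v (fun y => H (t, y)) x = lapAlong (fun i => (0, v i)) H (t, x) := by
  have hdiff : ∀ {K : ℝ × X → ℝ}, ContDiff ℝ ∞ K → Differentiable ℝ K :=
    fun h => h.differentiable (by simp)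
  simp only [lapAlong, dirDeriv_slice_snd (hdiff hH),
    dirDeriv_slice_snd (hdiff (hH.dirDeriv _))]

end Slices

section Euclidean

variable {m : ℕ}

theorem lapE_eq_lapAlong {g : E m → ℝ} (hg : ContDiff ℝ 2 g) (x : E m) :
    lapE m g x = lapAlong (eE m) g x := by
  have hd : Differentiable ℝ (fderiv ℝ g) :=
    (hg.fderiv_right (m := 1) le_rfl).differentiable one_ne_zero
  refine Finset.sum_congr rfl fun a _ => ?_
  show _ = fderiv ℝ (fun y => fderiv ℝ g y (eE m a)) x (eE m a)
  simp [D2E, iteratedFDeriv_two_apply, fderiv_clm_apply (hd x) (differentiableAt_const _)]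

theorem norm_gradient_sq_eq_gradNormSqAlong (g : E m → ℝ) (x : E m) :
    ‖gradient g x‖ ^ 2 = gradNormSqAlong (eE m) g x := by
  rw [EuclideanSpace.real_norm_sq_eq]
  refine Finset.sum_congr rfl fun a _ => ?_
  rw [dirDeriv, ← toDual_gradient, InnerProductSpace.toDual_apply_apply, eE,
    EuclideanSpace.inner_single_right]
  simp

theorem latt_single (i : Fin m) : latt m (Pi.single i 1) = eE m i := by
  ext j
  simp [latt, eE, Pi.single_apply]

end Euclidean

section Cube

variable {m : ℕ}

theorem toLp_preimage_cube : WithLp.toLp 2 ⁻¹' cube m = Icc (0 : Fin m → ℝ) 1 := by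
  ext y
  simp [cube, Pi.le_def, forall_and]

theorem isCompact_cube : IsCompact (cube m) := by
  rw [← image_preimage_eq (cube m) (WithLp.toLp_surjective 2), toLp_preimage_cube]
  exact isCompact_Icc.image (PiLp.continuous_toLp 2 _)

theorem setIntegral_cube {G : Type*} [NormedAddCommGroup G] [NormedSpace ℝ G] (F : E m → G) :
    ∫ x in cube m, F x = ∫ y in Icc (0 : Fin m → ℝ) 1, F (WithLp.toLp 2 y) := by
  rw [← toLp_preimage_cube, (PiLp.volume_preserving_toLp (Fin m)).setIntegral_preimage_emb
    (MeasurableEquiv.toLp 2 (Fin m → ℝ)).measurableEmbedding]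

theorem integral_Icc_sum_fderiv_eq_zero_of_periodic {n : ℕ}
    (f : Fin (n + 1) → (Fin (n + 1) → ℝ) → ℝ) (hf : ∀ i, ContDiff ℝ 1 (f i))
    (hper : ∀ i x, f i (x + Pi.single i 1) = f i x) :
    ∫ x in Icc (0 : Fin (n + 1) → ℝ) 1, ∑ i, fderiv ℝ (f i) x (Pi.single i 1) = 0 := by
  rw [integral_divergence_of_hasFDerivAt_off_countable' 0 1 zero_le_one f
    (fun i x => fderiv ℝ (f i) x) ∅ countable_empty (fun i => (hf i).continuous.continuousOn)
    (fun x _ i => ((hf i).differentiable one_ne_zero x).hasFDerivAt)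
    ((continuous_finsetSum _ fun i _ => ((hf i).continuous_fderiv one_ne_zero).clm_apply
      continuous_const).integrableOn_Icc)]
  refine Finset.sum_eq_zero fun i _ => sub_eq_zero.2 (setIntegral_congr_fun measurableSet_Icc
    fun x _ => ?_)
  have hface : i.insertNth (α := fun _ => ℝ) 1 x = i.insertNth 0 x + Pi.single i 1 := by
    ext j
    refine Fin.succAboveCases i ?_ (fun j => ?_) j <;> simp
  simp [hface, hper]

theorem integral_cube_lapE_eq_zero_of_periodic {g : E m → ℝ} (hg : ContDiff ℝ ∞ g)
    (hper : ∀ i y, g (y + eE m i) = g y) : ∫ x in cube m, lapE m g x = 0 := by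
  simp only [lapE_eq_lapAlong (hg.of_le (by decide))]
  obtain _ | n := m
  · simp [lapAlong]
  let eL : (Fin (n + 1) → ℝ) ≃L[ℝ] E (n + 1) := (EuclideanSpace.equiv (Fin (n + 1)) ℝ).symm
  have hfderiv : ∀ i y, fderiv ℝ (dirDeriv (eE _ i) g ∘ eL) y (Pi.single i 1)
      = dirDeriv (eE _ i) (dirDeriv (eE _ i) g) (eL y) := fun i y => by
    rw [eL.comp_right_fderiv]
    rfl
  rw [setIntegral_cube, ← integral_Icc_sum_fderiv_eq_zero_of_periodic
    (fun i => dirDeriv (eE _ i) g ∘ eL)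
    (fun i => ((hg.dirDeriv _).comp eL.contDiff).of_le (by decide))
    (fun i x => by
      rw [Function.comp_apply, Function.comp_apply, map_add]
      exact dirDeriv_add_of_periodic (hper i) _ _)]
  simp only [hfderiv]
  rfl

end Cube

theorem hasDerivAt_setIntegral_of_contDiff {X : Type*} [NormedAddCommGroup X] [NormedSpace ℝ X]
    [MeasurableSpace X] [OpensMeasurableSpace X] {μ : Measure X} [IsFiniteMeasureOnCompacts μ]
    {K : Set X} (hK : IsCompact K) {G : ℝ × X → ℝ} (hG : ContDiff ℝ 1 G) (t : ℝ) :
    HasDerivAt (fun s => ∫ x in K, G (s, x) ∂μ) (∫ x in K, dirDeriv (1, 0) G (t, x) ∂μ) t := by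
  have hslice : ∀ {H : ℝ × X → ℝ}, Continuous H → ∀ s : ℝ, Continuous fun x => H (s, x) :=
    fun hH s => hH.comp (continuous_const.prodMk continuous_id)
  have hG' : Continuous (dirDeriv (1, 0) G) :=
    (hG.continuous_fderiv one_ne_zero).clm_apply continuous_const
  obtain ⟨C, hC⟩ := (isCompact_Icc (a := t - 1) (b := t + 1)).prod hK
    |>.exists_bound_of_continuousOn hG'.continuousOn
  refine (hasDerivAt_integral_of_dominated_loc_of_deriv_le (bound := fun _ => C)
    (Metric.ball_mem_nhds t one_pos)
    (.of_forall fun s => (hslice hG.continuous s).aestronglyMeasurable)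
    ((hslice hG.continuous t).continuousOn.integrableOn_compact hK)
    (hslice hG' t).aestronglyMeasurable ?_ (integrableOn_const hK.measure_lt_top.ne)
    (.of_forall fun x s _ => hasDerivAt_slice_fst (hG.differentiable one_ne_zero) x s)).2
  filter_upwards [ae_restrict_mem hK.measurableSet] with x hx s hs
  rw [Metric.mem_ball, Real.dist_eq, abs_lt] at hs
  exact hC (s, x) ⟨⟨by linarith, by linarith⟩, hx⟩

section Energy

variable {m : ℕ}

def spaceDir (m : ℕ) (a : Fin m) : ℝ × E m := (0, eE m a)

theorem lapE_slice {H : ℝ × E m → ℝ} (hH : ContDiff ℝ ∞ H) (s : ℝ) (x : E m) :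
    lapE m (fun y => H (s, y)) x = lapAlong (spaceDir m) H (s, x) :=
  (lapE_eq_lapAlong ((hH.comp (contDiff_prodMk_right s)).of_le (by decide)) x).trans
    (lapAlong_slice_snd _ hH s x)

theorem norm_gradient_slice_sq {H : ℝ × E m → ℝ} (hH : Differentiable ℝ H) (s : ℝ) (x : E m) :
    ‖gradient (fun y => H (s, y)) x‖ ^ 2 = gradNormSqAlong (spaceDir m) H (s, x) :=
  (norm_gradient_sq_eq_gradNormSqAlong _ x).trans (gradNormSqAlong_slice_snd _ hH s x)

def energyDensity (Φ : ℝ × E m → ℝ) (p : ℝ × E m) : ℝ :=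
  gradNormSqAlong (spaceDir m) (fun q => -Real.log (Φ q)) p * Φ p

/-- The product `u w` of the paper, in the form `|∇f|² u - 2 Δu`. -/
def uw (Φ : ℝ × E m → ℝ) (p : ℝ × E m) : ℝ :=
  energyDensity Φ p - 2 * lapAlong (spaceDir m) Φ p

variable {Φ : ℝ × E m → ℝ}

theorem ContDiff.energyDensity (hΦ : ContDiff ℝ ∞ Φ) (hne : ∀ p, Φ p ≠ 0) :
    ContDiff ℝ ∞ (energyDensity Φ) :=
  (ContDiff.sum fun _ _ => ((hΦ.log hne).neg.dirDeriv _).pow 2).mul hΦ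

theorem ContDiff.uw (hΦ : ContDiff ℝ ∞ Φ) (hne : ∀ p, Φ p ≠ 0) : ContDiff ℝ ∞ (uw Φ) :=
  (hΦ.energyDensity hne).sub (contDiff_const.mul (hΦ.lapAlong _))

theorem energyDensity_add_of_periodic {c : ℝ × E m} (hc : ∀ q, Φ (q + c) = Φ q)
    (p : ℝ × E m) : energyDensity Φ (p + c) = energyDensity Φ p := by
  have hlog : ∀ q, -Real.log (Φ (q + c)) = -Real.log (Φ q) := fun q => by rw [hc]
  simp only [energyDensity, gradNormSqAlong,
    dirDeriv_add_of_periodic (H := fun q => -Real.log (Φ q)) hlog, hc]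

theorem hasDerivAt_integral_cube_energyDensity (hΦ : ContDiff ℝ ∞ Φ) (hne : ∀ p, Φ p ≠ 0)
    (hper : ∀ a q, Φ (q + spaceDir m a) = Φ q)
    (hheat : dirDeriv (1, 0) Φ = lapAlong (spaceDir m) Φ) (t : ℝ) :
    HasDerivAt (fun s => ∫ x in cube m, energyDensity Φ (s, x))
      (∫ x in cube m, (dirDeriv (1, 0) (uw Φ) (t, x) - lapAlong (spaceDir m) (uw Φ) (t, x))) t := by
  have hG := hΦ.energyDensity hne
  have hint : ∀ {H : ℝ × E m → ℝ}, ContDiff ℝ ∞ H → IntegrableOn (fun x => H (t, x)) (cube m) :=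
    fun h => (h.comp (contDiff_prodMk_right t)).continuous.continuousOn.integrableOn_compact
      isCompact_cube
  have hGper : ∀ a y, energyDensity Φ (t, y + eE m a) = energyDensity Φ (t, y) := fun a y => by
    simpa [spaceDir] using energyDensity_add_of_periodic (hper a) (t, y)
  have hcancel : ∀ x, dirDeriv (1, 0) (uw Φ) (t, x) - lapAlong (spaceDir m) (uw Φ) (t, x)
      = dirDeriv (1, 0) (energyDensity Φ) (t, x) - lapAlong (spaceDir m) (energyDensity Φ) (t, x) :=
    fun x => dirDeriv_sub_lapAlong_of_heat _ hΦ hG hheat (t, x)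
  rw [integral_congr_ae (.of_forall hcancel),
    integral_sub (hint (hG.dirDeriv _)) (hint (hG.lapAlong _))]
  simp only [← lapE_slice hG]
  rw [integral_cube_lapE_eq_zero_of_periodic (g := fun y => energyDensity Φ (t, y))
      (hG.comp (contDiff_prodMk_right t)) hGper, sub_zero]
  exact hasDerivAt_setIntegral_of_contDiff isCompact_cube (hG.of_le (by decide)) t

end Energy

/-- for a positive periodic solution of the heat equation, the entropy
energy `E(t) = ∫ |∇f|² u` (`f = −ln u`, `w = 2Δf − |∇f|²`) satisfies
`E'(t) = ∫ (∂_t − Δ)(u w)`. -/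
theorem energy_deriv_uw (m : ℕ) (u : ℝ → E m → ℝ)
    (hu : ContDiff ℝ (⊤ : ℕ∞) (Function.uncurry u)) (hpos : ∀ t x, 0 < u t x)
    (hper : ∀ (t : ℝ) (x : E m) (k : Fin m → ℤ), u t (x + latt m k) = u t x)
    (hheat : ∀ t x, deriv (fun s => u s x) t = lapE m (u t) x)
    (f w : ℝ → E m → ℝ) (hf : f = fun t x => -Real.log (u t x))
    (hw : w = fun t x => 2 * lapE m (f t) x - ‖gradient (f t) x‖ ^ 2)
    (Ent : ℝ → ℝ)
    (hE : Ent = fun t => ∫ x in cube m, ‖gradient (f t) x‖ ^ 2 * u t x)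
    (t : ℝ) :
    HasDerivAt Ent
      (∫ x in cube m,
        (deriv (fun s => u s x * w s x) t - lapE m (fun y => u t y * w t y) x)) t := by
  set Φ : ℝ × E m → ℝ := Function.uncurry u
  have hΦ : ContDiff ℝ ∞ Φ := hu
  have hne : ∀ p, Φ p ≠ 0 := fun p => (hpos p.1 p.2).ne'
  have hF : ContDiff ℝ ∞ fun p => -Real.log (Φ p) := (hΦ.log hne).neg
  have hfs : ∀ s, f s = fun y => -Real.log (Φ (s, y)) := fun s => by subst hf; rfl
  have hEnt : Ent = fun s => ∫ x in cube m, energyDensity Φ (s, x) := by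
    subst hE
    simp only [hfs, norm_gradient_slice_sq (hF.differentiable (by simp))]
    rfl
  have huw : ∀ s x, u s x * w s x = uw Φ (s, x) := fun s x => by
    simp only [hw]
    rw [hfs, lapE_slice hF, norm_gradient_slice_sq (hF.differentiable (by simp))]
    exact mul_two_lapAlong_sub_gradNormSqAlong_negLog hΦ hne _ (s, x)
  rw [hEnt]
  convert hasDerivAt_integral_cube_energyDensity hΦ hne
    (fun a ⟨s, y⟩ => by simpa [spaceDir, Φ, latt_single] using hper s y (Pi.single a 1))
    (funext fun ⟨s, x⟩ => by
      rw [← (hasDerivAt_slice_fst (hΦ.differentiable (by simp)) x s).deriv, ← lapE_slice hΦ]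
      exact hheat s x) t using 3 with x
  simp only [huw]
  rw [(hasDerivAt_slice_fst ((hΦ.uw hne).differentiable (by simp)) x t).deriv,
    lapE_slice (hΦ.uw hne)]
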